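/- arXiv:2002.12085 — 6 statements merged into one kernel-verified Lean document; each statement's English description precedes it below -/
import Mathlib

section
/- If X is a standard normal random variable and Ψ(t,x) = (tx - (t²+1))·cos(tx) + (tx + (t²+1))·sin(tx), then for every real t, E[Ψ(t,X)] = -exp(-t²/2). -/
/-!
Writing `e = exp (i t x)`, one has `Ψ(t, x) = Re ((1 - i) (t x e - i (t² + 1) e))`. For `X ∼ N(0, 1)`
and complex `z`, `E[exp (z X)] = exp (z² / 2)`, and differentiating in `z` gives
`E[X exp (z X)] = z exp (z² / 2)`. At `z = i t` this yields
`E[Ψ(t, X)] = Re ((1 - i) (t · i t - i (t² + 1))) exp (-t² / 2) = -exp (-t² / 2)`.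
-/

open MeasureTheory ProbabilityTheory Real Complex

theorem integral_mul_cexp_mul_gaussianReal (μ : ℝ) (v : NNReal) (z : ℂ) :
    ∫ x, x * cexp (z * x) ∂gaussianReal μ v = (μ + v * z) * cexp (z * μ + v * z ^ 2 / 2) := by
  have hmgf : HasDerivAt (complexMGF id (gaussianReal μ v))
      (∫ x, x * cexp (z * x) ∂gaussianReal μ v) z :=
    hasDerivAt_complexMGF (by simp)
  rw [funext complexMGF_id_gaussianReal] at hmgf
  refine hmgf.unique ?_
  refine ((((hasDerivAt_id' z).mul_const (μ : ℂ)).add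
    (((hasDerivAt_pow 2 z).const_mul (v : ℂ)).div_const 2)).cexp).congr_deriv ?_
  simp only [Pi.add_apply]
  ring

theorem sub_mul_cos_add_add_mul_sin_eq_re (t x : ℝ) :
    (t * x - (t ^ 2 + 1)) * Real.cos (t * x) + (t * x + (t ^ 2 + 1)) * Real.sin (t * x)
      = ((1 - I) * (t * (x * cexp (t * I * x)) - (t ^ 2 + 1) * I * cexp (t * I * x))).re := by
  rw [show (t : ℂ) * I * x = (t * x : ℝ) * I by push_cast; ring, exp_mul_I, ← ofReal_cos,
    ← ofReal_sin]
  generalize Real.cos (t * x) = c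
  generalize Real.sin (t * x) = s
  simp [← ofReal_pow]
  ring

theorem stmt_4 (Ψ : ℝ → ℝ → ℝ)
    (hΨ : ∀ t x : ℝ, Ψ t x = (t * x - (t ^ 2 + 1)) * Real.cos (t * x)
      + (t * x + (t ^ 2 + 1)) * Real.sin (t * x)) :
    ∀ t : ℝ, (∫ x, Ψ t x ∂(gaussianReal 0 1)) = -Real.exp (-t ^ 2 / 2) := by
  intro t
  have hexp : Integrable (fun x : ℝ => cexp (t * I * x)) (gaussianReal 0 1) :=
    integrable_cexp_mul_of_re_mem_interior_integrableExpSet (X := id) (by simp)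
  have hxexp : Integrable (fun x : ℝ => (x : ℂ) * cexp (t * I * x)) (gaussianReal 0 1) := by
    simpa using integrable_pow_mul_cexp_of_re_mem_interior_integrableExpSet (X := id)
      (μ := gaussianReal 0 1) (z := t * I) (by simp) 1
  have hint : Integrable (fun x : ℝ => (1 - I) * (t * (x * cexp (t * I * x))
      - (t ^ 2 + 1) * I * cexp (t * I * x))) (gaussianReal 0 1) :=
    ((hxexp.const_mul _).sub (hexp.const_mul _)).const_mul _
  have hmgf : ∫ x, cexp (t * I * x) ∂gaussianReal 0 1
      = cexp (t * I * (0 : ℝ) + (1 : NNReal) * (t * I) ^ 2 / 2) :=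
    complexMGF_id_gaussianReal _
  have hexponent : t * I * (0 : ℝ) + ((1 : NNReal) : ℂ) * (t * I) ^ 2 / 2 = (-t ^ 2 / 2 : ℝ) := by
    push_cast
    ring_nf
    rw [I_sq]
    ring
  simp_rw [hΨ, sub_mul_cos_add_add_mul_sin_eq_re]
  refine (integral_re hint).trans ?_
  rw [integral_const_mul, integral_sub (hxexp.const_mul _) (hexp.const_mul _), integral_const_mul,
    integral_const_mul, integral_mul_cexp_mul_gaussianReal, hmgf, hexponent, ← ofReal_exp]
  generalize Real.exp (-t ^ 2 / 2) = e
  simp [← ofReal_pow]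
  ring
end

section
/- If X is a standard normal random variable and Ψ(t,x) = (tx - (t²+1))·cos(tx) + (tx + (t²+1))·sin(tx), then for every real t, E[X·Ψ(t,X)] = 2t·exp(-t²/2). -/
/-!
Writing `e^{itx} = cos tx + i sin tx`, the integrand `x Ψ(t,x)` is the real part of
`t(1-i) x² e^{itx} - (t²+1)(1+i) x e^{itx}`. The Gaussian moments `E[X^k e^{zX}]` are the
derivatives of the complex moment generating function `z ↦ exp(zμ + vz²/2)`; at `z = it` for
the standard normal they are `it e^{-t²/2}` and `(1-t²) e^{-t²/2}`, which combine to
`(2t - 2ti) e^{-t²/2}`.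
-/

open MeasureTheory ProbabilityTheory Real

namespace ProbabilityTheory

open Complex NNReal

lemma hasDerivAt_cexp_mul_add_mul_sq_div_two (μ : ℝ) (v : ℝ≥0) (z : ℂ) :
    HasDerivAt (fun z : ℂ ↦ cexp (z * μ + v * z ^ 2 / 2))
      ((μ + v * z) * cexp (z * μ + v * z ^ 2 / 2)) z := by
  have h : HasDerivAt (fun z : ℂ ↦ z * μ + v * z ^ 2 / 2) (μ + v * z) z := by
    refine (((hasDerivAt_id' z).mul_const (μ : ℂ)).fun_add
      (((hasDerivAt_pow 2 z).const_mul (v : ℂ)).div_const 2)).congr_deriv ?_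
    ring
  simpa [mul_comm] using h.cexp

variable {μ : ℝ} {v : ℝ≥0}

lemma integral_mul_cexp_gaussianReal (z : ℂ) :
    ∫ x, x * cexp (z * x) ∂gaussianReal μ v = (μ + v * z) * cexp (z * μ + v * z ^ 2 / 2) := by
  have h := hasDerivAt_complexMGF (X := id) (μ := gaussianReal μ v) (z := z) (by simp)
  rw [show complexMGF id (gaussianReal μ v) = _ from funext complexMGF_id_gaussianReal] at h
  exact h.unique (hasDerivAt_cexp_mul_add_mul_sq_div_two μ v z)

lemma integral_sq_mul_cexp_gaussianReal (z : ℂ) :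
    ∫ x, x ^ 2 * cexp (z * x) ∂gaussianReal μ v
      = ((μ + v * z) ^ 2 + v) * cexp (z * μ + v * z ^ 2 / 2) := by
  have h := hasDerivAt_integral_pow_mul_exp (X := id) (μ := gaussianReal μ v) (z := z) (by simp) 1
  simp only [id, pow_one, integral_mul_cexp_gaussianReal] at h
  refine h.unique ((((hasDerivAt_id' z).const_mul (v : ℂ)).const_add (μ : ℂ)).fun_mul
    (hasDerivAt_cexp_mul_add_mul_sq_div_two μ v z) |>.congr_deriv ?_)
  ring

lemma integrable_pow_mul_cexp_gaussianReal (z : ℂ) (n : ℕ) :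
    Integrable (fun x : ℝ ↦ (x : ℂ) ^ n * cexp (z * x)) (gaussianReal μ v) :=
  integrable_pow_mul_cexp_of_re_mem_interior_integrableExpSet (X := id) (by simp) n

end ProbabilityTheory

open Complex

noncomputable def psiComplex (t x : ℝ) : ℂ :=
  t * (1 - I) * (x ^ 2 * cexp (t * I * x)) - (t ^ 2 + 1) * (1 + I) * (x * cexp (t * I * x))

lemma re_psiComplex (t x : ℝ) :
    (psiComplex t x).re = x * ((t * x - (t ^ 2 + 1)) * Real.cos (t * x)
      + (t * x + (t ^ 2 + 1)) * Real.sin (t * x)) := by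
  have hexp : cexp (t * I * x) = cexp ((t * x : ℝ) * I) := by push_cast; ring_nf
  have hre : (cexp (t * I * x)).re = Real.cos (t * x) := by rw [hexp, exp_ofReal_mul_I_re]
  have him : (cexp (t * I * x)).im = Real.sin (t * x) := by rw [hexp, exp_ofReal_mul_I_im]
  rw [psiComplex]
  generalize cexp (t * I * x) = e at hre him
  simp [Complex.mul_re, Complex.mul_im, hre, him, ← ofReal_pow]
  ring

lemma integrable_psiComplex (t : ℝ) : Integrable (psiComplex t) (gaussianReal 0 1) :=
  ((integrable_pow_mul_cexp_gaussianReal _ 2).const_mul _).sub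
    (by simpa using (integrable_pow_mul_cexp_gaussianReal _ 1).const_mul _)

lemma integral_psiComplex (t : ℝ) :
    ∫ x, psiComplex t x ∂gaussianReal 0 1 = (2 * t - 2 * t * I) * rexp (-t ^ 2 / 2) := by
  unfold psiComplex
  rw [integral_sub ((integrable_pow_mul_cexp_gaussianReal _ 2).const_mul _)
      (by simpa using (integrable_pow_mul_cexp_gaussianReal _ 1).const_mul _),
    integral_const_mul, integral_const_mul,
    integral_sq_mul_cexp_gaussianReal, integral_mul_cexp_gaussianReal]
  have hE : cexp (t * I * (0 : ℝ) + ((1 : NNReal) : ℝ) * (t * I) ^ 2 / 2) = rexp (-t ^ 2 / 2) := by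
    push_cast
    rw [mul_pow, I_sq]
    ring_nf
  rw [hE]
  generalize ((rexp (-t ^ 2 / 2) : ℝ) : ℂ) = E
  push_cast
  linear_combination (-t * E * (1 + t ^ 2 * I)) * I_sq

theorem stmt_5 (Ψ : ℝ → ℝ → ℝ)
    (hΨ : ∀ t x : ℝ, Ψ t x = (t * x - (t ^ 2 + 1)) * Real.cos (t * x)
      + (t * x + (t ^ 2 + 1)) * Real.sin (t * x)) :
    ∀ t : ℝ, (∫ x, x * Ψ t x ∂(gaussianReal 0 1)) = 2 * t * Real.exp (-t ^ 2 / 2) := by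
  intro t
  calc ∫ x, x * Ψ t x ∂gaussianReal 0 1
      = ∫ x, (psiComplex t x).re ∂gaussianReal 0 1 := by simp_rw [hΨ, re_psiComplex]
    _ = (∫ x, psiComplex t x ∂gaussianReal 0 1).re := integral_re (integrable_psiComplex t)
    _ = 2 * t * rexp (-t ^ 2 / 2) := by
      rw [integral_psiComplex]
      simp [-ofReal_exp]
end

section
/- Let X be a standard normal random variable and for each t ∈ ℝ let W(t) = (X + t)·cos(tX) + (t - X)·sin(tX) - exp(-t²/2)·X + t·exp(-t²/2)·(X² - 1). Then for all s, t ∈ ℝ, E[W(s)·W(t)] = (st + 1)·exp(-(s-t)²/2) - (2st + 1)·exp(-(s² + t²)/2). -/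
/-!
Write `δ g = x g - g'` for the divergence under the standard Gaussian measure, the adjoint of
`d/dx` by Stein's lemma `E[X f(X)] = E[f'(X)]`. Then `W(t) = δ φ_t` with `φ_t = wPotential t`,
`φ_t(x) = cos tx - sin tx - e^{-t²/2} (1 - t x)`, and two applications of Stein's lemma give
`E[δg δh] = E[g h] + E[g' h']`. By the product-to-sum formulas, `E[φ_s φ_t + φ_s' φ_t']` only
involves `E[cos aX] = e^{-a²/2}`, `E[sin aX] = 0` (the characteristic function) and, by Stein's
lemma once more, `E[X cos aX] = 0`, `E[X sin aX] = a e^{-a²/2}`, `E[X] = 0`, `E[X²] = 1`.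
-/

open MeasureTheory ProbabilityTheory Real

open scoped NNReal

/-- Closed under products by Hölder's inequality, so `fun_prop` discharges the integrability side
conditions of all the computations below. -/
@[fun_prop]
def MemLpAll {α : Type*} [MeasurableSpace α] (μ : Measure α) (f : α → ℝ) : Prop :=
  ∀ p : ℝ≥0, MemLp f p μ

namespace MemLpAll

variable {α : Type*} [MeasurableSpace α] {μ : Measure α} {f g : α → ℝ}

theorem integrable (hf : MemLpAll μ f) : Integrable f μ :=
  memLp_one_iff_integrable.1 (by simpa using hf 1)

@[fun_prop]
theorem const [IsFiniteMeasure μ] (c : ℝ) : MemLpAll μ fun _ ↦ c :=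
  fun _ ↦ memLp_const c

@[fun_prop]
theorem add (hf : MemLpAll μ f) (hg : MemLpAll μ g) : MemLpAll μ fun x ↦ f x + g x :=
  fun p ↦ (hf p).add (hg p)

@[fun_prop]
theorem neg (hf : MemLpAll μ f) : MemLpAll μ fun x ↦ -f x :=
  fun p ↦ (hf p).neg

@[fun_prop]
theorem sub (hf : MemLpAll μ f) (hg : MemLpAll μ g) : MemLpAll μ fun x ↦ f x - g x :=
  fun p ↦ (hf p).sub (hg p)

@[fun_prop]
theorem mul (hf : MemLpAll μ f) (hg : MemLpAll μ g) : MemLpAll μ fun x ↦ f x * g x := by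
  intro p
  have : ENNReal.HolderTriple (2 * p : ℝ≥0) (2 * p : ℝ≥0) p := by
    constructor
    push_cast
    rw [ENNReal.mul_inv (by simp) (by simp), ← add_mul, ENNReal.inv_two_add_inv_two, one_mul]
  exact (hg (2 * p)).mul' (hf (2 * p))

@[fun_prop]
theorem cos [IsFiniteMeasure μ] (hf : MemLpAll μ f) : MemLpAll μ fun x ↦ Real.cos (f x) :=
  fun _ ↦ MemLp.of_bound (continuous_cos.comp_aestronglyMeasurable (hf 1).1) 1
    (ae_of_all _ fun x ↦ by simpa using abs_cos_le_one (f x))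

@[fun_prop]
theorem sin [IsFiniteMeasure μ] (hf : MemLpAll μ f) : MemLpAll μ fun x ↦ Real.sin (f x) :=
  fun _ ↦ MemLp.of_bound (continuous_sin.comp_aestronglyMeasurable (hf 1).1) 1
    (ae_of_all _ fun x ↦ by simpa using abs_sin_le_one (f x))

end MemLpAll

@[fun_prop]
theorem memLpAll_id_gaussianReal (μ : ℝ) (v : ℝ≥0) : MemLpAll (gaussianReal μ v) fun x ↦ x :=
  memLp_id_gaussianReal

theorem integrable_gaussianReal_iff {μ : ℝ} {v : ℝ≥0} (hv : v ≠ 0) {f : ℝ → ℝ} :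
    Integrable f (gaussianReal μ v) ↔ Integrable fun x ↦ gaussianPDFReal μ v x * f x := by
  rw [gaussianReal_of_var_ne_zero _ hv, gaussianPDF_def,
    integrable_withDensity_iff_integrable_smul' (by fun_prop) (by simp)]
  simp [ENNReal.toReal_ofReal (gaussianPDFReal_nonneg _ _ _)]

theorem hasDerivAt_gaussianPDFReal (μ : ℝ) (v : ℝ≥0) (x : ℝ) :
    HasDerivAt (gaussianPDFReal μ v) (-(x - μ) / v * gaussianPDFReal μ v x) x := by
  rcases eq_or_ne v 0 with rfl | hv
  · simp
  have h : HasDerivAt (fun y ↦ -(y - μ) ^ 2 / (2 * v)) (-(2 * (x - μ)) / (2 * v)) x := by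
    simpa using (((hasDerivAt_id x).sub_const μ).pow 2).neg.div_const (2 * (v : ℝ))
  rw [gaussianPDFReal_def]
  refine (h.exp.const_mul (√(2 * π * v))⁻¹).congr_deriv ?_
  field_simp

theorem integral_sub_mul_gaussianReal {μ : ℝ} {v : ℝ≥0} {f f' : ℝ → ℝ}
    (hf : ∀ x, HasDerivAt f (f' x) x) (hfi : Integrable f (gaussianReal μ v))
    (hf'i : Integrable f' (gaussianReal μ v))
    (hxfi : Integrable (fun x ↦ (x - μ) * f x) (gaussianReal μ v)) :
    ∫ x, (x - μ) * f x ∂gaussianReal μ v = v * ∫ x, f' x ∂gaussianReal μ v := by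
  rcases eq_or_ne v 0 with rfl | hv
  · simp
  have hv' : (v : ℝ) ≠ 0 := by exact_mod_cast hv
  rw [integrable_gaussianReal_iff hv] at hfi hf'i hxfi
  have hderiv : ∀ x, HasDerivAt (fun y ↦ gaussianPDFReal μ v y * f y)
      (gaussianPDFReal μ v x * f' x - (v : ℝ)⁻¹ * (gaussianPDFReal μ v x * ((x - μ) * f x))) x :=
    fun x ↦ by
      refine ((hasDerivAt_gaussianPDFReal μ v x).mul (hf x)).congr_deriv ?_
      field_simp
      ring
  have h := integral_eq_zero_of_hasDerivAt_of_integrable hderiv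
    (hf'i.sub (hxfi.const_mul _)) hfi
  rw [integral_sub hf'i (hxfi.const_mul _), integral_const_mul, sub_eq_zero] at h
  simp only [integral_gaussianReal_eq_integral_smul hv, smul_eq_mul]
  rw [h]
  field_simp

theorem integral_divergence_mul_divergence_gaussianReal {μ : ℝ} {v : ℝ≥0}
    {g g' h h' h'' : ℝ → ℝ} (hg : ∀ x, HasDerivAt g (g' x) x) (hh : ∀ x, HasDerivAt h (h' x) x)
    (hh' : ∀ x, HasDerivAt h' (h'' x) x) (mg : MemLpAll (gaussianReal μ v) g)
    (mg' : MemLpAll (gaussianReal μ v) g') (mh : MemLpAll (gaussianReal μ v) h)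
    (mh' : MemLpAll (gaussianReal μ v) h') (mh'' : MemLpAll (gaussianReal μ v) h'') :
    ∫ x, ((x - μ) * g x - v * g' x) * ((x - μ) * h x - v * h' x) ∂gaussianReal μ v
      = v * ∫ x, g x * h x + v * (g' x * h' x) ∂gaussianReal μ v := by
  have stein₁ := integral_sub_mul_gaussianReal (μ := μ) (v := v)
    (f := fun x ↦ g x * ((x - μ) * h x - v * h' x))
    (f' := fun x ↦ g' x * ((x - μ) * h x - v * h' x) + g x * (h x + (x - μ) * h' x - v * h'' x))
    (fun x ↦ ((hg x).mul ((((hasDerivAt_id x).sub_const μ).mul (hh x)).sub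
      ((hh' x).const_mul _))).congr_deriv (by simp))
    (MemLpAll.integrable (by fun_prop)) (MemLpAll.integrable (by fun_prop))
    (MemLpAll.integrable (by fun_prop))
  have stein₂ := integral_sub_mul_gaussianReal (μ := μ) (v := v)
    (f := fun x ↦ g x * h' x) (f' := fun x ↦ g' x * h' x + g x * h'' x)
    (fun x ↦ (hg x).mul (hh' x))
    (MemLpAll.integrable (by fun_prop)) (MemLpAll.integrable (by fun_prop))
    (MemLpAll.integrable (by fun_prop))
  calc ∫ x, ((x - μ) * g x - v * g' x) * ((x - μ) * h x - v * h' x) ∂gaussianReal μ v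
      = ∫ x, (x - μ) * (g x * ((x - μ) * h x - v * h' x)) ∂gaussianReal μ v
        - v * ∫ x, g' x * ((x - μ) * h x - v * h' x) ∂gaussianReal μ v := by
        rw [← integral_const_mul, ← integral_sub (MemLpAll.integrable (by fun_prop))
          (MemLpAll.integrable (by fun_prop))]
        simp only [mul_assoc, sub_mul]
    _ = v * ∫ x, g x * (h x + (x - μ) * h' x - v * h'' x) ∂gaussianReal μ v := by
        rw [stein₁, integral_add (MemLpAll.integrable (by fun_prop))
          (MemLpAll.integrable (by fun_prop))]
        ring
    _ = v * (∫ x, g x * h x ∂gaussianReal μ v + ∫ x, (x - μ) * (g x * h' x) ∂gaussianReal μ v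
        - v * ∫ x, g x * h'' x ∂gaussianReal μ v) := by
        congr 1
        rw [← integral_const_mul,
          ← integral_add (MemLpAll.integrable (by fun_prop)) (MemLpAll.integrable (by fun_prop)),
          ← integral_sub (MemLpAll.integrable (by fun_prop)) (MemLpAll.integrable (by fun_prop))]
        congr with x
        ring
    _ = v * ∫ x, g x * h x + v * (g' x * h' x) ∂gaussianReal μ v := by
        rw [stein₂,
          integral_add (MemLpAll.integrable (by fun_prop)) (MemLpAll.integrable (by fun_prop)),
          integral_add (MemLpAll.integrable (by fun_prop)) (MemLpAll.integrable (by fun_prop)),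
          integral_const_mul]
        ring

theorem integrable_cexp_mul_I {μ : Measure ℝ} [IsFiniteMeasure μ] (a : ℝ) :
    Integrable (fun x : ℝ ↦ Complex.exp (a * x * Complex.I)) μ :=
  Integrable.of_bound (by fun_prop) 1
    (ae_of_all _ fun x ↦ by rw [← Complex.ofReal_mul, Complex.norm_exp_ofReal_mul_I])

theorem integral_cos_mul_gaussianReal (μ : ℝ) (v : ℝ≥0) (a : ℝ) :
    ∫ x, cos (a * x) ∂gaussianReal μ v = rexp (-(v * a ^ 2 / 2)) * cos (a * μ) := by
  have h := congrArg Complex.re (charFun_gaussianReal (μ := μ) (v := v) a)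
  rw [charFun_apply_real, ← RCLike.re_eq_complex_re, ← integral_re (integrable_cexp_mul_I a)] at h
  norm_cast at h
  simpa [Complex.exp_re, Complex.exp_ofReal_mul_I_re, ← Complex.ofReal_pow] using h

theorem integral_sin_mul_gaussianReal (μ : ℝ) (v : ℝ≥0) (a : ℝ) :
    ∫ x, sin (a * x) ∂gaussianReal μ v = rexp (-(v * a ^ 2 / 2)) * sin (a * μ) := by
  have h := congrArg Complex.im (charFun_gaussianReal (μ := μ) (v := v) a)
  rw [charFun_apply_real, ← RCLike.im_eq_complex_im, ← integral_im (integrable_cexp_mul_I a)] at h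
  norm_cast at h
  simpa [Complex.exp_im, Complex.exp_ofReal_mul_I_im, ← Complex.ofReal_pow] using h

theorem integral_sub_mul_cos_mul_gaussianReal (μ : ℝ) (v : ℝ≥0) (a : ℝ) :
    ∫ x, (x - μ) * cos (a * x) ∂gaussianReal μ v
      = -(v * a * (rexp (-(v * a ^ 2 / 2)) * sin (a * μ))) := by
  rw [integral_sub_mul_gaussianReal (f' := fun x ↦ -(sin (a * x) * a))
    (fun x ↦ by simpa using ((hasDerivAt_id x).const_mul a).cos)
    (MemLpAll.integrable (by fun_prop)) (MemLpAll.integrable (by fun_prop))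
    (MemLpAll.integrable (by fun_prop)),
    integral_neg, integral_mul_const, integral_sin_mul_gaussianReal]
  ring

theorem integral_sub_mul_sin_mul_gaussianReal (μ : ℝ) (v : ℝ≥0) (a : ℝ) :
    ∫ x, (x - μ) * sin (a * x) ∂gaussianReal μ v
      = v * a * (rexp (-(v * a ^ 2 / 2)) * cos (a * μ)) := by
  rw [integral_sub_mul_gaussianReal (f' := fun x ↦ cos (a * x) * a)
    (fun x ↦ by simpa using ((hasDerivAt_id x).const_mul a).sin)
    (MemLpAll.integrable (by fun_prop)) (MemLpAll.integrable (by fun_prop))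
    (MemLpAll.integrable (by fun_prop)),
    integral_mul_const, integral_cos_mul_gaussianReal]
  ring

noncomputable def wPotential (t x : ℝ) : ℝ :=
  cos (t * x) - sin (t * x) - rexp (-t ^ 2 / 2) * (1 - t * x)

noncomputable def wPotentialDeriv (t x : ℝ) : ℝ :=
  t * (rexp (-t ^ 2 / 2) - sin (t * x) - cos (t * x))

theorem hasDerivAt_wPotential (t x : ℝ) :
    HasDerivAt (wPotential t) (wPotentialDeriv t x) x := by
  have hl : HasDerivAt (fun y ↦ t * y) t x := by simpa using (hasDerivAt_id x).const_mul t
  refine ((hl.cos.sub hl.sin).sub ((hl.const_sub 1).const_mul _)).congr_deriv ?_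
  simp only [wPotentialDeriv]
  ring

theorem hasDerivAt_wPotentialDeriv (t x : ℝ) :
    HasDerivAt (wPotentialDeriv t) (t ^ 2 * (sin (t * x) - cos (t * x))) x := by
  have hl : HasDerivAt (fun y ↦ t * y) t x := by simpa using (hasDerivAt_id x).const_mul t
  refine (((hl.sin.const_sub _).sub hl.cos).const_mul t).congr_deriv ?_
  ring

theorem memLpAll_wPotential (μ : ℝ) (v : ℝ≥0) (t : ℝ) :
    MemLpAll (gaussianReal μ v) (wPotential t) := by
  unfold wPotential
  fun_prop

theorem memLpAll_wPotentialDeriv (μ : ℝ) (v : ℝ≥0) (t : ℝ) :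
    MemLpAll (gaussianReal μ v) (wPotentialDeriv t) := by
  unfold wPotentialDeriv
  fun_prop

theorem integral_wPotential_mul_add (s t : ℝ) :
    ∫ x, wPotential s x * wPotential t x + wPotentialDeriv s x * wPotentialDeriv t x
        ∂gaussianReal 0 1
      = (s * t + 1) * rexp (-(s - t) ^ 2 / 2)
        - (2 * s * t + 1) * (rexp (-s ^ 2 / 2) * rexp (-t ^ 2 / 2)) := by
  have expand : ∀ x,
      wPotential s x * wPotential t x + wPotentialDeriv s x * wPotentialDeriv t x
        = (1 + s * t) * cos ((s - t) * x) + (s * t - 1) * sin ((s + t) * x)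
          - rexp (-t ^ 2 / 2) * (1 + s * t) * cos (s * x)
          - rexp (-t ^ 2 / 2) * (s * t - 1) * sin (s * x)
          + rexp (-t ^ 2 / 2) * t * (x * cos (s * x)) - rexp (-t ^ 2 / 2) * t * (x * sin (s * x))
          - rexp (-s ^ 2 / 2) * (1 + s * t) * cos (t * x)
          - rexp (-s ^ 2 / 2) * (s * t - 1) * sin (t * x)
          + rexp (-s ^ 2 / 2) * s * (x * cos (t * x)) - rexp (-s ^ 2 / 2) * s * (x * sin (t * x))
          + rexp (-s ^ 2 / 2) * rexp (-t ^ 2 / 2) * (1 + s * t)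
          - x * (rexp (-s ^ 2 / 2) * rexp (-t ^ 2 / 2) * (s + t))
          + rexp (-s ^ 2 / 2) * rexp (-t ^ 2 / 2) * (s * t) * (x * x) := by
    intro x
    simp only [wPotential, wPotentialDeriv, sub_mul, add_mul, cos_sub, sin_add]
    ring
  have hxcos : ∀ a, ∫ x, x * cos (a * x) ∂gaussianReal 0 1 = 0 := fun a ↦ by
    simpa using integral_sub_mul_cos_mul_gaussianReal 0 1 a
  have hxsin : ∀ a, ∫ x, x * sin (a * x) ∂gaussianReal 0 1 = a * rexp (-(a ^ 2 / 2)) :=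
    fun a ↦ by simpa using integral_sub_mul_sin_mul_gaussianReal 0 1 a
  have hxx : ∫ x, x * x ∂gaussianReal 0 1 = 1 := by
    simpa using integral_sub_mul_gaussianReal (μ := 0) (v := 1) (f' := fun _ ↦ 1) hasDerivAt_id
      (MemLpAll.integrable (by fun_prop)) (MemLpAll.integrable (by fun_prop))
      (MemLpAll.integrable (by fun_prop))
  simp (disch := exact MemLpAll.integrable (by fun_prop)) only [expand, integral_add,
    integral_sub, integral_const_mul, integral_mul_const]
  simp [integral_cos_mul_gaussianReal, integral_sin_mul_gaussianReal, hxcos, hxsin, hxx]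
  simp only [neg_div]
  ring

theorem stmt_7 (W : ℝ → ℝ → ℝ)
    (hW : ∀ t x : ℝ, W t x = (x + t) * Real.cos (t * x) + (t - x) * Real.sin (t * x)
      - Real.exp (-t ^ 2 / 2) * x + t * Real.exp (-t ^ 2 / 2) * (x ^ 2 - 1)) :
    ∀ s t : ℝ, (∫ x, W s x * W t x ∂(gaussianReal 0 1))
      = (s * t + 1) * Real.exp (-(s - t) ^ 2 / 2)
        - (2 * s * t + 1) * Real.exp (-(s ^ 2 + t ^ 2) / 2) := by
  intro s t
  have hW_div : ∀ u x,
      W u x = (x - 0) * wPotential u x - ((1 : ℝ≥0) : ℝ) * wPotentialDeriv u x := by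
    intro u x
    rw [hW, wPotential, wPotentialDeriv]
    push_cast
    ring
  simp_rw [hW_div]
  rw [integral_divergence_mul_divergence_gaussianReal (hasDerivAt_wPotential s)
      (hasDerivAt_wPotential t) (hasDerivAt_wPotentialDeriv t) (memLpAll_wPotential 0 1 s)
      (memLpAll_wPotentialDeriv 0 1 s) (memLpAll_wPotential 0 1 t)
      (memLpAll_wPotentialDeriv 0 1 t) (by fun_prop)]
  simp only [NNReal.coe_one, one_mul, integral_wPotential_mul_add]
  rw [← Real.exp_add]
  ring_nf
end

section
/- For fixed real numbers y and z and a > 0, ∫_ℝ [ (t·cos(ty) - y·sin(ty))·(t·cos(tz) - z·sin(tz)) + (y·cos(ty) + t·sin(ty))·(z·cos(tz) + t·sin(tz)) ]·exp(-a·t²) dt = √(π/a)·[ (1/(4a²))·(2a - (y-z)²) - (1/(2a))·(y-z)² + y·z ]·exp(-(y-z)²/(4a)). -/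
open MeasureTheory Complex Filter Topology Set Real Asymptotics

lemma integral_deriv_zero {f f' : ℝ → ℂ}
    (hderiv : ∀ x : ℝ, HasDerivAt f (f' x) x) (hint : Integrable f')
    (htop : Tendsto f atTop (𝓝 0)) (hbot : Tendsto f atBot (𝓝 0)) :
    (∫ x : ℝ, f' x) = 0 := by
  have h1 : (∫ x in Iic (0:ℝ), f' x) = f 0 - 0 :=
    integral_Iic_of_hasDerivAt_of_tendsto' (fun x _ => hderiv x) hint.integrableOn hbot
  have h2 : (∫ x in Ioi (0:ℝ), f' x) = 0 - f 0 :=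
    integral_Ioi_of_hasDerivAt_of_tendsto' (fun x _ => hderiv x) hint.integrableOn htop
  rw [← intervalIntegral.integral_Iic_add_Ioi hint.integrableOn hint.integrableOn, h1, h2]
  ring

noncomputable def gg (a s : ℝ) (t : ℝ) : ℂ := Complex.exp (-(a:ℂ) * t ^ 2 + I * s * t)

lemma norm_gg (a s t : ℝ) : ‖gg a s t‖ = Real.exp (-a * t ^ 2) := by
  rw [gg, Complex.norm_exp]
  congr 1
  simp [Complex.add_re, Complex.mul_re, Complex.mul_im, ← Complex.ofReal_pow]

lemma cont_gg (a s : ℝ) : Continuous (gg a s) := by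
  apply Complex.continuous_exp.comp
  fun_prop

lemma hasDerivAt_gg (a s : ℝ) (t : ℝ) :
    HasDerivAt (gg a s) ((-2 * a * t + I * s) * gg a s t) t := by
  have hu : HasDerivAt (fun u : ℝ => (u : ℂ)) 1 t := by
    simpa using (hasDerivAt_id t).ofReal_comp
  have h1 : HasDerivAt (fun u : ℝ => -(a:ℂ) * u ^ 2 + I * s * u) (-2 * a * t + I * s) t := by
    have h4 := ((hu.mul hu).const_mul (-(a:ℂ))).add (hu.const_mul (I * (s:ℂ)))
    have he : (fun u : ℝ => -(a:ℂ) * u ^ 2 + I * s * u)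
        = (fun u : ℝ => -(a:ℂ) * ((u:ℂ) * u) + I * s * u) := by
      funext u; ring
    rw [he]
    exact h4.congr_deriv (by ring)
  have := h1.cexp
  exact this.congr_deriv (by rw [gg]; ring)

lemma integrable_gg (a s : ℝ) (ha : 0 < a) : Integrable (gg a s) := by
  have := integrable_cexp_quadratic' (b := -(a:ℂ))
    (by simpa using ha : (-(a:ℂ)).re < 0) (I * s) 0
  have he : (fun x : ℝ => cexp (-(a:ℂ) * x ^ 2 + I * s * x + 0)) = gg a s := by
    funext x; rw [gg, add_zero]
  rw [← he]
  exact this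

lemma integrable_mul_gg (a s : ℝ) (ha : 0 < a) :
    Integrable (fun t : ℝ => (t:ℂ) * gg a s t) := by
  refine Integrable.mono' (integrable_mul_exp_neg_mul_sq ha).abs
    (Continuous.aestronglyMeasurable (by exact Complex.continuous_ofReal.mul (cont_gg a s)))
    (ae_of_all _ fun t => ?_)
  rw [norm_mul, norm_gg, Complex.norm_real, Real.norm_eq_abs, abs_mul,
    abs_of_pos (Real.exp_pos _)]

lemma integrable_sq_mul_gg (a s : ℝ) (ha : 0 < a) :
    Integrable (fun t : ℝ => (t:ℂ) ^ 2 * gg a s t) := by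
  have hb : Integrable (fun x : ℝ => x ^ (2:ℝ) * Real.exp (-a * x ^ 2)) :=
    integrable_rpow_mul_exp_neg_mul_sq ha (by norm_num)
  simp_rw [Real.rpow_two] at hb
  refine Integrable.mono' hb
    (Continuous.aestronglyMeasurable
      (by exact (Complex.continuous_ofReal.pow 2).mul (cont_gg a s)))
    (ae_of_all _ fun t => ?_)
  rw [norm_mul, norm_gg, norm_pow, Complex.norm_real, Real.norm_eq_abs, _root_.sq_abs]

lemma tendsto_abs_mul_exp (a : ℝ) (ha : 0 < a) :
    Tendsto (fun t : ℝ => |t| * Real.exp (-a * t ^ 2)) atTop (𝓝 0) := by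
  have h := rpow_mul_exp_neg_mul_sq_isLittleO_exp_neg ha 1
  have hx : Tendsto (fun x : ℝ => -(1/2) * x) atTop atBot := by
    have h1 : Tendsto (fun x : ℝ => (1/2 : ℝ) * x) atTop atTop :=
      tendsto_id.const_mul_atTop (by norm_num)
    have := tendsto_neg_atTop_atBot.comp h1
    simpa [Function.comp_def, neg_mul] using this
  have h0 : Tendsto (fun x : ℝ => Real.exp (-(1/2) * x)) atTop (𝓝 0) :=
    Real.tendsto_exp_atBot.comp hx
  have := h.tendsto_zero_of_tendsto h0
  apply this.congr'
  filter_upwards [eventually_ge_atTop (0:ℝ)] with t ht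
  rw [Real.rpow_one, _root_.abs_of_nonneg ht]

lemma tendsto_abs_mul_exp_bot (a : ℝ) (ha : 0 < a) :
    Tendsto (fun t : ℝ => |t| * Real.exp (-a * t ^ 2)) atBot (𝓝 0) := by
  have := (tendsto_abs_mul_exp a ha).comp tendsto_neg_atBot_atTop
  simpa [Function.comp_def, neg_sq] using this

lemma tendsto_exp_sq (a : ℝ) (ha : 0 < a) :
    Tendsto (fun t : ℝ => Real.exp (-a * t ^ 2)) atTop (𝓝 0) := by
  apply Real.tendsto_exp_atBot.comp
  have h2 : Tendsto (fun t : ℝ => t ^ 2) atTop atTop := tendsto_pow_atTop (two_ne_zero)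
  have := (tendsto_neg_atTop_atBot).comp ((h2.const_mul_atTop ha))
  simpa [Function.comp_def, neg_mul] using this

lemma tendsto_exp_sq_bot (a : ℝ) (ha : 0 < a) :
    Tendsto (fun t : ℝ => Real.exp (-a * t ^ 2)) atBot (𝓝 0) := by
  have := (tendsto_exp_sq a ha).comp tendsto_neg_atBot_atTop
  simpa [Function.comp_def, neg_sq] using this

lemma tendsto_gg_top (a s : ℝ) (ha : 0 < a) : Tendsto (gg a s) atTop (𝓝 0) := by
  rw [tendsto_zero_iff_norm_tendsto_zero]
  simp_rw [norm_gg]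
  exact tendsto_exp_sq a ha

lemma tendsto_gg_bot (a s : ℝ) (ha : 0 < a) : Tendsto (gg a s) atBot (𝓝 0) := by
  rw [tendsto_zero_iff_norm_tendsto_zero]
  simp_rw [norm_gg]
  exact tendsto_exp_sq_bot a ha

lemma tendsto_mul_gg_top (a s : ℝ) (ha : 0 < a) :
    Tendsto (fun t : ℝ => (t:ℂ) * gg a s t) atTop (𝓝 0) := by
  rw [tendsto_zero_iff_norm_tendsto_zero]
  have : ∀ t : ℝ, ‖(t:ℂ) * gg a s t‖ = |t| * Real.exp (-a * t ^ 2) := fun t => by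
    rw [norm_mul, norm_gg, Complex.norm_real, Real.norm_eq_abs]
  simp_rw [this]
  exact tendsto_abs_mul_exp a ha

lemma tendsto_mul_gg_bot (a s : ℝ) (ha : 0 < a) :
    Tendsto (fun t : ℝ => (t:ℂ) * gg a s t) atBot (𝓝 0) := by
  rw [tendsto_zero_iff_norm_tendsto_zero]
  have : ∀ t : ℝ, ‖(t:ℂ) * gg a s t‖ = |t| * Real.exp (-a * t ^ 2) := fun t => by
    rw [norm_mul, norm_gg, Complex.norm_real, Real.norm_eq_abs]
  simp_rw [this]
  exact tendsto_abs_mul_exp_bot a ha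

lemma integral_gg_eq (a s : ℝ) (ha : 0 < a) :
    (∫ t : ℝ, gg a s t) = ((Real.sqrt (π / a) * Real.exp (-s^2 / (4*a)) : ℝ) : ℂ) := by
  have hb : (-(a:ℂ)).re < 0 := by simpa using ha
  have h := integral_cexp_quadratic hb (I * s) 0
  have he : (fun x : ℝ => cexp (-(a:ℂ) * x ^ 2 + I * s * x + 0)) = gg a s := by
    funext x; rw [gg, add_zero]
  rw [he] at h
  rw [h]
  have h1 : (π / -(-(a:ℂ))) = ((π / a : ℝ) : ℂ) := by push_cast; ring
  have h2 : ((0:ℂ) - (I * s) ^ 2 / (4 * -(a:ℂ))) = ((-s^2 / (4*a) : ℝ) : ℂ) := by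
    have ha' : (a:ℂ) ≠ 0 := by exact_mod_cast ha.ne'
    rw [mul_pow, Complex.I_sq]
    push_cast
    field_simp
    ring
  rw [h1, h2, ← Complex.ofReal_exp]
  rw [Real.sqrt_eq_rpow, Complex.ofReal_mul, Complex.ofReal_cpow (by positivity) (1/2 : ℝ)]
  norm_num

lemma moment1 (a s : ℝ) (ha : 0 < a) :
    (-2*(a:ℂ)) * (∫ t : ℝ, (t:ℂ) * gg a s t) + (I*s) * (∫ t : ℝ, gg a s t) = 0 := by
  have hz : (∫ t : ℝ, ((-2*(a:ℂ))*((t:ℂ) * gg a s t) + (I*s) * gg a s t)) = 0 := by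
    apply integral_deriv_zero (f := gg a s)
    · intro t
      have := hasDerivAt_gg a s t
      convert this using 1
      ring
    · exact ((integrable_mul_gg a s ha).const_mul _).add ((integrable_gg a s ha).const_mul _)
    · exact tendsto_gg_top a s ha
    · exact tendsto_gg_bot a s ha
  have hf1 : Integrable (fun t : ℝ => (-2*(a:ℂ)) * ((t:ℂ) * gg a s t)) := by
    exact (integrable_mul_gg a s ha).const_mul _
  have hf2 : Integrable (fun t : ℝ => I * (s:ℂ) * gg a s t) := by
    exact (integrable_gg a s ha).const_mul _
  rw [integral_add hf1 hf2, integral_const_mul, integral_const_mul] at hz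
  exact hz

lemma moment2 (a s : ℝ) (ha : 0 < a) :
    (∫ t : ℝ, gg a s t) + (I*s) * (∫ t : ℝ, (t:ℂ) * gg a s t)
      + (-2*(a:ℂ)) * (∫ t : ℝ, (t:ℂ)^2 * gg a s t) = 0 := by
  have hz : (∫ t : ℝ, (gg a s t + (I*s) * ((t:ℂ) * gg a s t)
      + (-2*(a:ℂ)) * ((t:ℂ)^2 * gg a s t))) = 0 := by
    apply integral_deriv_zero (f := fun t : ℝ => (t:ℂ) * gg a s t)
    · intro t
      have hu : HasDerivAt (fun u : ℝ => (u : ℂ)) 1 t := by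
        simpa using (hasDerivAt_id t).ofReal_comp
      have := hu.mul (hasDerivAt_gg a s t)
      exact this.congr_deriv (by ring)
    · exact ((integrable_gg a s ha).add ((integrable_mul_gg a s ha).const_mul _)).add
        ((integrable_sq_mul_gg a s ha).const_mul _)
    · exact tendsto_mul_gg_top a s ha
    · exact tendsto_mul_gg_bot a s ha
  have hf1 : Integrable (fun t : ℝ => gg a s t + I * (s:ℂ) * ((t:ℂ) * gg a s t)) := by
    exact (integrable_gg a s ha).add ((integrable_mul_gg a s ha).const_mul _)
  have hf2 : Integrable (fun t : ℝ => (-2*(a:ℂ)) * ((t:ℂ)^2 * gg a s t)) := by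
    exact (integrable_sq_mul_gg a s ha).const_mul _
  have hf3 : Integrable (fun t : ℝ => I * (s:ℂ) * ((t:ℂ) * gg a s t)) := by
    exact (integrable_mul_gg a s ha).const_mul _
  rw [integral_add hf1 hf2, integral_add (integrable_gg a s ha) hf3,
    integral_const_mul, integral_const_mul] at hz
  exact hz

theorem stmt_10 (a y z : ℝ) (ha : 0 < a) :
    (∫ t : ℝ, ((t * Real.cos (t * y) - y * Real.sin (t * y))
        * (t * Real.cos (t * z) - z * Real.sin (t * z))
      + (y * Real.cos (t * y) + t * Real.sin (t * y))
        * (z * Real.cos (t * z) + t * Real.sin (t * z))) * Real.exp (-a * t ^ 2))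
    = Real.sqrt (Real.pi / a)
      * ((1 / (4 * a ^ 2)) * (2 * a - (y - z) ^ 2) - (1 / (2 * a)) * (y - z) ^ 2 + y * z)
      * Real.exp (-(y - z) ^ 2 / (4 * a)) := by
  have ha0 : a ≠ 0 := ha.ne'
  have haC : (a:ℂ) ≠ 0 := by exact_mod_cast ha0
  set s : ℝ := y - z with hs
  set G : ℝ := Real.sqrt (π / a) * Real.exp (-s^2 / (4*a)) with hG
  -- pointwise identity
  have hgg : ∀ t : ℝ, gg a s t
      = ((Real.exp (-a*t^2) * Real.cos (s*t) : ℝ) : ℂ)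
        + ((Real.exp (-a*t^2) * Real.sin (s*t) : ℝ) : ℂ) * I := by
    intro t
    rw [gg, show -(a:ℂ) * (t:ℂ) ^ 2 + I * (s:ℂ) * (t:ℂ)
        = ((-a * t^2 : ℝ) : ℂ) + ((s * t : ℝ) : ℂ) * I by push_cast; ring,
      Complex.exp_add, Complex.exp_mul_I, ← Complex.ofReal_exp, ← Complex.ofReal_cos,
      ← Complex.ofReal_sin]
    push_cast
    ring
  have hpt : ∀ t : ℝ, ((t * Real.cos (t * y) - y * Real.sin (t * y))
        * (t * Real.cos (t * z) - z * Real.sin (t * z))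
      + (y * Real.cos (t * y) + t * Real.sin (t * y))
        * (z * Real.cos (t * z) + t * Real.sin (t * z))) * Real.exp (-a * t ^ 2)
      = (((t:ℂ)^2 + (y:ℂ)*(z:ℂ) + I*(s:ℂ)*(t:ℂ)) * gg a s t).re := by
    intro t
    rw [show ((t:ℂ)^2 + (y:ℂ)*(z:ℂ) + I*(s:ℂ)*(t:ℂ))
        = ((t^2 + y*z : ℝ) : ℂ) + ((s*t : ℝ) : ℂ) * I by push_cast; ring, hgg t]
    simp only [Complex.add_re, Complex.add_im, Complex.mul_re, Complex.mul_im,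
      Complex.ofReal_re, Complex.ofReal_im, Complex.I_re, Complex.I_im]
    rw [show s * t = t * y - t * z by rw [hs]; ring, Real.cos_sub, Real.sin_sub]
    ring
  -- the complex integrand and its integral
  have hfeq : (fun t : ℝ => ((t:ℂ)^2 + (y:ℂ)*(z:ℂ) + I*(s:ℂ)*(t:ℂ)) * gg a s t)
      = fun t : ℝ => ((t:ℂ)^2 * gg a s t + ((y:ℂ)*(z:ℂ)) * gg a s t)
        + (I*(s:ℂ)) * ((t:ℂ) * gg a s t) := by
    funext t; ring
  have hint : Integrable (fun t : ℝ => ((t:ℂ)^2 + (y:ℂ)*(z:ℂ) + I*(s:ℂ)*(t:ℂ)) * gg a s t) := by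
    rw [hfeq]
    exact ((integrable_sq_mul_gg a s ha).add ((integrable_gg a s ha).const_mul _)).add
      ((integrable_mul_gg a s ha).const_mul _)
  have hsplit : (∫ t : ℝ, ((t:ℂ)^2 + (y:ℂ)*(z:ℂ) + I*(s:ℂ)*(t:ℂ)) * gg a s t)
      = (∫ t : ℝ, (t:ℂ)^2 * gg a s t) + ((y:ℂ)*(z:ℂ)) * (∫ t : ℝ, gg a s t)
        + (I*(s:ℂ)) * (∫ t : ℝ, (t:ℂ) * gg a s t) := by
    rw [hfeq]
    have hf1 : Integrable (fun t : ℝ => (t:ℂ)^2 * gg a s t + ((y:ℂ)*(z:ℂ)) * gg a s t) := by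
      exact (integrable_sq_mul_gg a s ha).add ((integrable_gg a s ha).const_mul _)
    have hf2 : Integrable (fun t : ℝ => ((y:ℂ)*(z:ℂ)) * gg a s t) := by
      exact (integrable_gg a s ha).const_mul _
    have hf3 : Integrable (fun t : ℝ => (I*(s:ℂ)) * ((t:ℂ) * gg a s t)) := by
      exact (integrable_mul_gg a s ha).const_mul _
    rw [integral_add hf1 hf3, integral_add (integrable_sq_mul_gg a s ha) hf2,
      integral_const_mul, integral_const_mul]
  -- moment values
  have hA : (∫ t : ℝ, gg a s t) = (G : ℂ) := by rw [integral_gg_eq a s ha, hG]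
  have hB : (∫ t : ℝ, (t:ℂ) * gg a s t) = ((s * G / (2*a) : ℝ) : ℂ) * I := by
    have h1 := moment1 a s ha
    rw [hA] at h1
    push_cast
    field_simp at h1 ⊢
    linear_combination -h1
  have hC : (∫ t : ℝ, (t:ℂ)^2 * gg a s t) = (((2*a - s^2) / (4*a^2) * G : ℝ) : ℂ) := by
    have h2 := moment2 a s ha
    rw [hA, hB] at h2
    push_cast
    field_simp at h2 ⊢
    linear_combination (norm := (push_cast; field_simp; ring)) (-2*(a:ℂ)) * h2 + (s:ℂ)^2 * (G:ℂ) * Complex.I_sq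
  -- put everything together
  have hval : (∫ t : ℝ, ((t:ℂ)^2 + (y:ℂ)*(z:ℂ) + I*(s:ℂ)*(t:ℂ)) * gg a s t)
      = ((G * ((1 / (4 * a ^ 2)) * (2 * a - s ^ 2) - (1 / (2 * a)) * s ^ 2 + y * z) : ℝ) : ℂ) := by
    rw [hsplit, hA, hB, hC]
    push_cast
    field_simp
    linear_combination ((s:ℂ)^2 * (G:ℂ) * 2 * a + (-2*(a:ℂ)*(s:ℂ)^2*(G:ℂ) + 4*(a:ℂ)*(s:ℂ)^2*(G:ℂ))) * Complex.I_sq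
  calc (∫ t : ℝ, ((t * Real.cos (t * y) - y * Real.sin (t * y))
        * (t * Real.cos (t * z) - z * Real.sin (t * z))
      + (y * Real.cos (t * y) + t * Real.sin (t * y))
        * (z * Real.cos (t * z) + t * Real.sin (t * z))) * Real.exp (-a * t ^ 2))
      = ∫ t : ℝ, (((t:ℂ)^2 + (y:ℂ)*(z:ℂ) + I*(s:ℂ)*(t:ℂ)) * gg a s t).re := by
        congr 1; funext t; exact hpt t
    _ = (∫ t : ℝ, ((t:ℂ)^2 + (y:ℂ)*(z:ℂ) + I*(s:ℂ)*(t:ℂ)) * gg a s t).re := by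
        simpa using integral_re hint
    _ = G * ((1 / (4 * a ^ 2)) * (2 * a - s ^ 2) - (1 / (2 * a)) * s ^ 2 + y * z) := by
        rw [hval, Complex.ofReal_re]
    _ = Real.sqrt (Real.pi / a)
      * ((1 / (4 * a ^ 2)) * (2 * a - (y - z) ^ 2) - (1 / (2 * a)) * (y - z) ^ 2 + y * z)
      * Real.exp (-(y - z) ^ 2 / (4 * a)) := by
        rw [hG, ← hs]; ring
end

section
/- For real numbers y₁, …, yₙ with Σⱼ yⱼ = 0 and Σⱼ yⱼ² = n, let Z_a = (1/n)·√(π/a)·Σ_{j,k} [ (1/(4a²))·(2a - (yⱼ-yₖ)²) - (1/(2a))·(yⱼ-yₖ)² + yⱼ·yₖ ]·exp(-(yⱼ-yₖ)²/(4a)). Then lim_{a→∞} (16·a^{5/2}/(3·n·√π))·Z_a = ((1/n)·Σⱼ yⱼ³)². -/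
open Finset Filter

set_option maxHeartbeats 2000000

noncomputable def RF (u v a : ℝ) : ℝ :=
  Real.exp (-(u - v)^2/(4*a)) - (1 - (u - v)^2/(4*a) + ((u - v)^2/(4*a))^2/2)

noncomputable def cbF (u v a : ℝ) : ℝ :=
  u*v + (1/2 - (u - v)^2/2)*a⁻¹ - (u - v)^2/4*(a⁻¹*a⁻¹)

lemma aux_exp (x : ℝ) (hx : |x| ≤ 1) :
    |Real.exp x - (1 + x + x^2/2)| ≤ |x|^3 * (2/9) := by
  have h := Real.exp_bound hx (n := 3) (by norm_num)
  have hs : (∑ m ∈ Finset.range 3, x ^ m / m.factorial) = 1 + x + x^2/2 := by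
    norm_num [Finset.sum_range_succ, Nat.factorial]
  rw [hs] at h
  refine le_trans h (le_of_eq ?_)
  norm_num [Nat.factorial]

lemma aux_term (u v : ℝ) :
    Tendsto (fun a : ℝ => cbF u v a * (a^2 * RF u v a)) atTop (nhds 0) := by
  have h1 : Tendsto (fun a : ℝ => cbF u v a) atTop (nhds (u*v)) := by
    unfold cbF
    have hinv := tendsto_inv_atTop_zero (𝕜 := ℝ)
    have h := ((tendsto_const_nhds (x := u*v)).add
        (hinv.const_mul (1/2 - (u - v)^2/2))).sub
        ((hinv.mul hinv).const_mul ((u - v)^2/4))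
    simpa using h
  have h2 : Tendsto (fun a : ℝ => a^2 * RF u v a) atTop (nhds 0) := by
    set D := (u - v)^2 with hD
    have hDnn : (0:ℝ) ≤ D := hD ▸ sq_nonneg _
    apply squeeze_zero_norm' (a := fun b : ℝ => D^3/288 * b⁻¹)
    · filter_upwards [eventually_ge_atTop (max 1 D)] with a ha
      have ha1 : (1:ℝ) ≤ a := le_trans (le_max_left _ _) ha
      have haD : D ≤ a := le_trans (le_max_right _ _) ha
      have ha0 : (0:ℝ) < a := lt_of_lt_of_le one_pos ha1
      have hx1 : |(-(D/(4*a)))| ≤ 1 := by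
        rw [abs_neg, abs_of_nonneg (by positivity)]
        rw [div_le_one (by positivity)]
        nlinarith
      have hb := aux_exp _ hx1
      have harg : -D/(4*a) = -(D/(4*a)) := by ring
      have hpoly : 1 - D/(4*a) + (D/(4*a))^2/2
          = 1 + (-(D/(4*a))) + (-(D/(4*a)))^2/2 := by ring
      have habs : |(-(D/(4*a)))| = D/(4*a) := by
        rw [abs_neg, abs_of_nonneg (by positivity)]
      calc ‖a^2 * RF u v a‖
          = a^2 * |Real.exp (-(D/(4*a))) - (1 + (-(D/(4*a))) + (-(D/(4*a)))^2/2)| := by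
            rw [Real.norm_eq_abs, RF, ← hD, harg, hpoly, abs_mul,
              abs_of_nonneg (by positivity : (0:ℝ) ≤ a^2)]
        _ ≤ a^2 * (|(-(D/(4*a)))|^3 * (2/9)) :=
            mul_le_mul_of_nonneg_left hb (by positivity)
        _ = D^3/288 * a⁻¹ := by
            rw [habs]
            field_simp
            ring
    · have h := tendsto_inv_atTop_zero (𝕜 := ℝ) |>.const_mul (D^3/288)
      simpa using h
  have h := h1.mul h2
  simpa using h

lemma aux_key (n : ℕ) (y : Fin n → ℝ)
    (h0 : (∑ j, y j) = 0) (h1 : (∑ j, (y j) ^ 2) = n) (t : ℝ) :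
    (∑ j, ∑ k, ((y j)*(y k) + (1/2 - (y j - y k)^2/2)*t - (y j - y k)^2/4*(t*t)) *
      (1 - (y j - y k)^2/4*t + ((y j - y k)^2)^2/32*(t*t)))
    = (3/16 * (∑ j, (y j)^3) * (∑ j, (y j)^3)) * t^2 + (15/32*(n:ℝ)^2 - 5/16*(n:ℝ)*(∑ j, (y j)^4) - 1/32*(n:ℝ)*(∑ j, (y j)^6) + 5/16*(∑ j, (y j)^3)*(∑ j, (y j)^3)) * t^3 + (5/32*(∑ j, (y j)^3)*(∑ j, (y j)^3) - 15/64*(n:ℝ)*(∑ j, (y j)^4) - 1/64*(n:ℝ)*(∑ j, (y j)^6)) * t^4 := by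
  have expand : ∀ x z : ℝ,
      (x*z + (1/2 - (x - z)^2/2)*t - (x - z)^2/4*(t*t)) *
        (1 - (x - z)^2/4*t + ((x - z)^2)^2/32*(t*t)) = ((1) * t ^ 0) * (x ^ 1 * z ^ 1) + ((1/2) * t ^ 1) * (x ^ 0 * z ^ 0) + ((-1/2) * t ^ 1) * (x ^ 0 * z ^ 2) + ((1) * t ^ 1) * (x ^ 1 * z ^ 1) + ((-1/4) * t ^ 1) * (x ^ 1 * z ^ 3) + ((-1/2) * t ^ 1) * (x ^ 2 * z ^ 0) + ((1/2) * t ^ 1) * (x ^ 2 * z ^ 2) + ((-1/4) * t ^ 1) * (x ^ 3 * z ^ 1) + ((-3/8) * t ^ 2) * (x ^ 0 * z ^ 2) + ((1/8) * t ^ 2) * (x ^ 0 * z ^ 4) + ((3/4) * t ^ 2) * (x ^ 1 * z ^ 1) + ((-1/2) * t ^ 2) * (x ^ 1 * z ^ 3) + ((1/32) * t ^ 2) * (x ^ 1 * z ^ 5) + ((-3/8) * t ^ 2) * (x ^ 2 * z ^ 0) + ((3/4) * t ^ 2) * (x ^ 2 * z ^ 2) + ((-1/8) * t ^ 2) * (x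 ^ 2 * z ^ 4) + ((-1/2) * t ^ 2) * (x ^ 3 * z ^ 1) + ((3/16) * t ^ 2) * (x ^ 3 * z ^ 3) + ((1/8) * t ^ 2) * (x ^ 4 * z ^ 0) + ((-1/8) * t ^ 2) * (x ^ 4 * z ^ 2) + ((1/32) * t ^ 2) * (x ^ 5 * z ^ 1) + ((5/64) * t ^ 3) * (x ^ 0 * z ^ 4) + ((-1/64) * t ^ 3) * (x ^ 0 * z ^ 6) + ((-5/16) * t ^ 3) * (x ^ 1 * z ^ 3) + ((3/32) * t ^ 3) * (x ^ 1 * z ^ 5) + ((15/32) * t ^ 3) * (x ^ 2 * z ^ 2) + ((-15/64) * t ^ 3) * (x ^ 2 * z ^ 4) + ((-5/16) * t ^ 3) * (x ^ 3 * z ^ 1) + ((5/16) * t ^ 3) * (x ^ 3 * z ^ 3) + ((5/64) * t ^ 3) * (x ^ 4 * z ^ 0) + ((-15/64) * t ^ 3) * (x ^ 4 * z ^ 2) + ((3/32) * t ^ 3) * (x ^ 5 * z ^ 1) + ((-1/64) * t ^ 3) * (x ^ 6 * z ^ 0) + ((-1/128) * t ^ 4) * (x ^ 0 * z ^ 6)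 + ((3/64) * t ^ 4) * (x ^ 1 * z ^ 5) + ((-15/128) * t ^ 4) * (x ^ 2 * z ^ 4) + ((5/32) * t ^ 4) * (x ^ 3 * z ^ 3) + ((-15/128) * t ^ 4) * (x ^ 4 * z ^ 2) + ((3/64) * t ^ 4) * (x ^ 5 * z ^ 1) + ((-1/128) * t ^ 4) * (x ^ 6 * z ^ 0) := by
    intro x z; ring
  calc (∑ j, ∑ k, ((y j)*(y k) + (1/2 - (y j - y k)^2/2)*t - (y j - y k)^2/4*(t*t)) *
      (1 - (y j - y k)^2/4*t + ((y j - y k)^2)^2/32*(t*t)))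
      = ∑ j, ∑ k, (((1) * t ^ 0) * ((y j) ^ 1 * (y k) ^ 1) + ((1/2) * t ^ 1) * ((y j) ^ 0 * (y k) ^ 0) + ((-1/2) * t ^ 1) * ((y j) ^ 0 * (y k) ^ 2) + ((1) * t ^ 1) * ((y j) ^ 1 * (y k) ^ 1) + ((-1/4) * t ^ 1) * ((y j) ^ 1 * (y k) ^ 3) + ((-1/2) * t ^ 1) * ((y j) ^ 2 * (y k) ^ 0) + ((1/2) * t ^ 1) * ((y j) ^ 2 * (y k) ^ 2) + ((-1/4) * t ^ 1) * ((y j) ^ 3 * (y k) ^ 1) + ((-3/8) * t ^ 2) * ((y j) ^ 0 * (y k) ^ 2) + ((1/8) * t ^ 2) * ((y j) ^ 0 * (y k) ^ 4) + ((3/4) * t ^ 2) * ((y j) ^ 1 * (y k) ^ 1) + ((-1/2) * t ^ 2) * ((y j) ^ 1 * (y k) ^ 3) + ((1/32) * t ^ 2) * ((y j) ^ 1 * (y k) ^ 5) + ((-3/8) * t ^ 2) * ((y j) ^ 2 * (y k) ^ 0) + ((3/4) * t ^ 2) * ((y j) ^ 2 * (y k) ^ 2) + ((-1/8) * t ^ 2)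 * ((y j) ^ 2 * (y k) ^ 4) + ((-1/2) * t ^ 2) * ((y j) ^ 3 * (y k) ^ 1) + ((3/16) * t ^ 2) * ((y j) ^ 3 * (y k) ^ 3) + ((1/8) * t ^ 2) * ((y j) ^ 4 * (y k) ^ 0) + ((-1/8) * t ^ 2) * ((y j) ^ 4 * (y k) ^ 2) + ((1/32) * t ^ 2) * ((y j) ^ 5 * (y k) ^ 1) + ((5/64) * t ^ 3) * ((y j) ^ 0 * (y k) ^ 4) + ((-1/64) * t ^ 3) * ((y j) ^ 0 * (y k) ^ 6) + ((-5/16) * t ^ 3) * ((y j) ^ 1 * (y k) ^ 3) + ((3/32) * t ^ 3) * ((y j) ^ 1 * (y k) ^ 5) + ((15/32) * t ^ 3) * ((y j) ^ 2 * (y k) ^ 2) + ((-15/64) * t ^ 3) * ((y j) ^ 2 * (y k) ^ 4) + ((-5/16) * t ^ 3) * ((y j) ^ 3 * (y k) ^ 1) + ((5/16) * t ^ 3) * ((y j) ^ 3 * (y k) ^ 3) + ((5/64) * t ^ 3) * ((y j) ^ 4 * (y k) ^ 0) + ((-15/64) * t ^ 3) * ((y j) ^ 4 * (y k) ^ 2)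 + ((3/32) * t ^ 3) * ((y j) ^ 5 * (y k) ^ 1) + ((-1/64) * t ^ 3) * ((y j) ^ 6 * (y k) ^ 0) + ((-1/128) * t ^ 4) * ((y j) ^ 0 * (y k) ^ 6) + ((3/64) * t ^ 4) * ((y j) ^ 1 * (y k) ^ 5) + ((-15/128) * t ^ 4) * ((y j) ^ 2 * (y k) ^ 4) + ((5/32) * t ^ 4) * ((y j) ^ 3 * (y k) ^ 3) + ((-15/128) * t ^ 4) * ((y j) ^ 4 * (y k) ^ 2) + ((3/64) * t ^ 4) * ((y j) ^ 5 * (y k) ^ 1) + ((-1/128) * t ^ 4) * ((y j) ^ 6 * (y k) ^ 0)) :=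
        Finset.sum_congr rfl fun j _ => Finset.sum_congr rfl fun k _ => expand _ _
    _ = _ := by
        simp only [Finset.sum_add_distrib, ← Finset.mul_sum, ← Finset.sum_mul]
        simp only [pow_zero, pow_one]
        rw [h0, h1]
        simp only [Finset.sum_const, Finset.card_univ, Fintype.card_fin, nsmul_eq_mul, mul_one]
        ring

theorem stmt_14 (n : ℕ) (hn : 1 ≤ n) (y : Fin n → ℝ)
    (h0 : (∑ j, y j) = 0) (h1 : (∑ j, (y j) ^ 2) = n)
    (Z : ℝ → ℝ)
    (hZ : ∀ a : ℝ, Z a = (1 / n : ℝ) * Real.sqrt (Real.pi / a) *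
      ∑ j, ∑ k, ((1 / (4 * a ^ 2)) * (2 * a - (y j - y k) ^ 2)
        - (1 / (2 * a)) * (y j - y k) ^ 2 + y j * y k)
        * Real.exp (-(y j - y k) ^ 2 / (4 * a))) :
    Tendsto (fun a : ℝ => (16 * a ^ ((5 : ℝ) / 2) / (3 * n * Real.sqrt Real.pi)) * Z a)
      atTop (nhds (((1 / n : ℝ) * ∑ j, (y j) ^ 3) ^ 2)) := by
  have hnR : (0:ℝ) < n := by exact_mod_cast hn
  have hn0 : (n:ℝ) ≠ 0 := ne_of_gt hnR
  have key := aux_key n y h0 h1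
  have heq : ∀ᶠ a in atTop,
      (16 * a ^ ((5 : ℝ) / 2) / (3 * n * Real.sqrt Real.pi)) * Z a
      = (16/(3*(n:ℝ)^2)) * (((3/16 * (∑ j, (y j)^3) * (∑ j, (y j)^3)) + (15/32*(n:ℝ)^2 - 5/16*(n:ℝ)*(∑ j, (y j)^4) - 1/32*(n:ℝ)*(∑ j, (y j)^6) + 5/16*(∑ j, (y j)^3)*(∑ j, (y j)^3)) * a⁻¹ + (5/32*(∑ j, (y j)^3)*(∑ j, (y j)^3) - 15/64*(n:ℝ)*(∑ j, (y j)^4) - 1/64*(n:ℝ)*(∑ j, (y j)^6)) * (a⁻¹*a⁻¹))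
          + ∑ j, ∑ k, cbF (y j) (y k) a * (a^2 * RF (y j) (y k) a)) := by
    filter_upwards [eventually_ge_atTop (1:ℝ)] with a ha1
    have ha0 : (0:ℝ) < a := lt_of_lt_of_le one_pos ha1
    have ha0' : a ≠ 0 := ne_of_gt ha0
    have hsa : 0 < Real.sqrt a := Real.sqrt_pos.mpr ha0
    have hsp : 0 < Real.sqrt Real.pi := Real.sqrt_pos.mpr Real.pi_pos
    have h52 : a ^ ((5:ℝ)/2) = a^2 * Real.sqrt a := by
      rw [show ((5:ℝ)/2) = ((2:ℕ):ℝ) + (1/2:ℝ) by norm_num, Real.rpow_add ha0,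
        Real.rpow_natCast, Real.sqrt_eq_rpow]
    have hscal : ∀ S : ℝ,
        16 * a ^ ((5 : ℝ) / 2) / (3 * (n:ℝ) * Real.sqrt Real.pi)
          * ((1 / (n:ℝ)) * Real.sqrt (Real.pi / a) * S)
        = 16/(3*(n:ℝ)^2) * (a^2 * S) := by
      intro S
      rw [Real.sqrt_div Real.pi_pos.le, h52]
      field_simp
    have hterm : ∀ j k : Fin n,
        ((1 / (4 * a ^ 2)) * (2 * a - (y j - y k) ^ 2)
          - (1 / (2 * a)) * (y j - y k) ^ 2 + y j * y k)
          * Real.exp (-(y j - y k) ^ 2 / (4 * a))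
        = ((y j)*(y k) + (1/2 - (y j - y k)^2/2)*a⁻¹ - (y j - y k)^2/4*(a⁻¹*a⁻¹)) *
            (1 - (y j - y k)^2/4*a⁻¹ + ((y j - y k)^2)^2/32*(a⁻¹*a⁻¹))
          + cbF (y j) (y k) a * RF (y j) (y k) a := by
      intro j k
      have hc : (1 / (4 * a ^ 2)) * (2 * a - (y j - y k) ^ 2)
            - (1 / (2 * a)) * (y j - y k) ^ 2 + y j * y k
          = (y j)*(y k) + (1/2 - (y j - y k)^2/2)*a⁻¹ - (y j - y k)^2/4*(a⁻¹*a⁻¹) := by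
        field_simp
        ring
      have hp : (1 - (y j - y k)^2/4*a⁻¹ + ((y j - y k)^2)^2/32*(a⁻¹*a⁻¹))
          = (1 - (y j - y k)^2/(4*a) + ((y j - y k)^2/(4*a))^2/2) := by
        field_simp
        ring
      rw [hc, hp]
      unfold cbF RF
      ring
    have hsum : (∑ j, ∑ k, ((1 / (4 * a ^ 2)) * (2 * a - (y j - y k) ^ 2)
          - (1 / (2 * a)) * (y j - y k) ^ 2 + y j * y k)
          * Real.exp (-(y j - y k) ^ 2 / (4 * a)))
        = (∑ j, ∑ k, ((y j)*(y k) + (1/2 - (y j - y k)^2/2)*a⁻¹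
              - (y j - y k)^2/4*(a⁻¹*a⁻¹)) *
            (1 - (y j - y k)^2/4*a⁻¹ + ((y j - y k)^2)^2/32*(a⁻¹*a⁻¹)))
          + (∑ j, ∑ k, cbF (y j) (y k) a * RF (y j) (y k) a) := by
      rw [← Finset.sum_add_distrib]
      refine Finset.sum_congr rfl fun j _ => ?_
      rw [← Finset.sum_add_distrib]
      exact Finset.sum_congr rfl fun k _ => hterm j k
    have hF : a^2 * (∑ j, ∑ k, ((y j)*(y k) + (1/2 - (y j - y k)^2/2)*a⁻¹
              - (y j - y k)^2/4*(a⁻¹*a⁻¹)) *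
            (1 - (y j - y k)^2/4*a⁻¹ + ((y j - y k)^2)^2/32*(a⁻¹*a⁻¹)))
        = ((3/16 * (∑ j, (y j)^3) * (∑ j, (y j)^3)) + (15/32*(n:ℝ)^2 - 5/16*(n:ℝ)*(∑ j, (y j)^4) - 1/32*(n:ℝ)*(∑ j, (y j)^6) + 5/16*(∑ j, (y j)^3)*(∑ j, (y j)^3)) * a⁻¹ + (5/32*(∑ j, (y j)^3)*(∑ j, (y j)^3) - 15/64*(n:ℝ)*(∑ j, (y j)^4) - 1/64*(n:ℝ)*(∑ j, (y j)^6)) * (a⁻¹*a⁻¹)) := by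
      rw [key a⁻¹]
      field_simp
    have hU : a^2 * (∑ j, ∑ k, cbF (y j) (y k) a * RF (y j) (y k) a)
        = ∑ j, ∑ k, cbF (y j) (y k) a * (a^2 * RF (y j) (y k) a) := by
      rw [Finset.mul_sum]
      refine Finset.sum_congr rfl fun j _ => ?_
      rw [Finset.mul_sum]
      exact Finset.sum_congr rfl fun k _ => by ring
    rw [hZ, hscal, hsum, mul_add, hF, hU]
  have hpoly : Tendsto (fun a : ℝ => ((3/16 * (∑ j, (y j)^3) * (∑ j, (y j)^3)) + (15/32*(n:ℝ)^2 - 5/16*(n:ℝ)*(∑ j, (y j)^4) - 1/32*(n:ℝ)*(∑ j, (y j)^6) + 5/16*(∑ j, (y j)^3)*(∑ j, (y j)^3)) * a⁻¹ + (5/32*(∑ j, (y j)^3)*(∑ j, (y j)^3) - 15/64*(n:ℝ)*(∑ j, (y j)^4) - 1/64*(n:ℝ)*(∑ j, (y j)^6)) * (a⁻¹*a⁻¹)))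
      atTop (nhds ((3/16 * (∑ j, (y j)^3) * (∑ j, (y j)^3)) + (15/32*(n:ℝ)^2 - 5/16*(n:ℝ)*(∑ j, (y j)^4) - 1/32*(n:ℝ)*(∑ j, (y j)^6) + 5/16*(∑ j, (y j)^3)*(∑ j, (y j)^3)) * 0 + (5/32*(∑ j, (y j)^3)*(∑ j, (y j)^3) - 15/64*(n:ℝ)*(∑ j, (y j)^4) - 1/64*(n:ℝ)*(∑ j, (y j)^6)) * (0*0))) := by
    exact ((tendsto_const_nhds).add ((tendsto_inv_atTop_zero (𝕜 := ℝ)).const_mul _)).add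
      (((tendsto_inv_atTop_zero (𝕜 := ℝ)).mul (tendsto_inv_atTop_zero (𝕜 := ℝ))).const_mul _)
  have hin : ∀ j : Fin n, Tendsto
      (fun a : ℝ => ∑ k, cbF (y j) (y k) a * (a^2 * RF (y j) (y k) a)) atTop (nhds 0) := by
    intro j
    have h := tendsto_finset_sum (univ : Finset (Fin n)) (fun k _ => aux_term (y j) (y k))
    simpa using h
  have hsum0 : Tendsto
      (fun a : ℝ => ∑ j, ∑ k, cbF (y j) (y k) a * (a^2 * RF (y j) (y k) a))
      atTop (nhds 0) := by
    have h := tendsto_finset_sum (univ : Finset (Fin n)) (fun j _ => hin j)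
    simpa using h
  have hmain := (hpoly.add hsum0).const_mul (16/(3*(n:ℝ)^2))
  have hval : (16/(3*(n:ℝ)^2)) * ((((3/16 * (∑ j, (y j)^3) * (∑ j, (y j)^3)) + (15/32*(n:ℝ)^2 - 5/16*(n:ℝ)*(∑ j, (y j)^4) - 1/32*(n:ℝ)*(∑ j, (y j)^6) + 5/16*(∑ j, (y j)^3)*(∑ j, (y j)^3)) * 0 + (5/32*(∑ j, (y j)^3)*(∑ j, (y j)^3) - 15/64*(n:ℝ)*(∑ j, (y j)^4) - 1/64*(n:ℝ)*(∑ j, (y j)^6)) * (0*0))) + 0)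
      = ((1 / (n:ℝ)) * ∑ j, (y j) ^ 3) ^ 2 := by
    field_simp
    ring
  rw [hval] at hmain
  exact Tendsto.congr' (EventuallyEq.symm heq) hmain
end

section
/- The first cumulant of the limiting distribution satisfies ∫_ℝ K(t,t)·exp(-a·t²) dt = -(√π/2)·(2a^{5/2} - 2√(a+1)·a² + 4a^{3/2} - 3√(a+1)·a - √(a+1)) / ((a+1)^{3/2}·a^{3/2}) for every a > 0, where K(s,t) = (st+1)·exp(-(s-t)²/2) - (2st+1)·exp(-(s²+t²)/2). -/
/-!
On the diagonal the first term of `K` is `t² + 1` and the Gaussian factors of the second term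
combine with `exp (-a t²)` into `exp (-(a + 1) t²)`. So the integral is a difference of two
integrals `∫ (c t² + 1) exp (-b t²) dt = √(π / b) (c / (2b) + 1)`, the second moment coming from
the Gaussian integral by one integration by parts. The result is
`√π ((2a + 1) / (2 a^{3/2}) - (a + 2) / (a + 1)^{3/2})`, which is the stated closed form.
-/

open Real MeasureTheory Filter Topology

section GaussianSecondMoment

variable {b : ℝ}

lemma integrable_sq_mul_exp_neg_mul_sq (hb : 0 < b) :
    Integrable fun x : ℝ => x ^ 2 * exp (-b * x ^ 2) := by
  simpa only [rpow_two, sq_abs] using integrable_rpow_mul_exp_neg_mul_sq hb (s := 2) (by norm_num)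

lemma hasDerivAt_mul_exp_neg_mul_sq (b x : ℝ) :
    HasDerivAt (fun x : ℝ => x * exp (-b * x ^ 2))
      (exp (-b * x ^ 2) - 2 * b * (x ^ 2 * exp (-b * x ^ 2))) x := by
  have hexp : HasDerivAt (fun x : ℝ => exp (-b * x ^ 2)) (exp (-b * x ^ 2) * (-b * (2 * x))) x :=
    (((hasDerivAt_pow 2 x).const_mul (-b)).exp).congr_deriv (by simp)
  exact ((hasDerivAt_id' x).mul hexp).congr_deriv (by ring)

lemma tendsto_mul_exp_neg_mul_sq_cocompact (hb : 0 < b) :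
    Tendsto (fun x : ℝ => x * exp (-b * x ^ 2)) (cocompact ℝ) (𝓝 0) := by
  rw [tendsto_zero_iff_norm_tendsto_zero]
  simpa [abs_of_pos (exp_pos _)] using tendsto_rpow_abs_mul_exp_neg_mul_sq_cocompact hb 1

lemma integral_sq_mul_exp_neg_mul_sq (hb : 0 < b) :
    ∫ x : ℝ, x ^ 2 * exp (-b * x ^ 2) = √(π / b) / (2 * b) := by
  have hint := (integrable_sq_mul_exp_neg_mul_sq hb).const_mul (2 * b)
  have hlim := tendsto_mul_exp_neg_mul_sq_cocompact hb
  rw [cocompact_eq_atBot_atTop] at hlim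
  have hparts := integral_of_hasDerivAt_of_tendsto (hasDerivAt_mul_exp_neg_mul_sq b)
    ((integrable_exp_neg_mul_sq hb).sub hint) (hlim.mono_left le_sup_left)
    (hlim.mono_left le_sup_right)
  rw [sub_zero, integral_sub (integrable_exp_neg_mul_sq hb) hint, integral_const_mul,
    integral_gaussian, sub_eq_zero] at hparts
  rw [eq_div_iff (by positivity)]
  linarith

lemma integrable_mul_sq_add_one_mul_exp_neg_mul_sq (hb : 0 < b) (c : ℝ) :
    Integrable fun x : ℝ => (c * x ^ 2 + 1) * exp (-b * x ^ 2) := by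
  refine (((integrable_sq_mul_exp_neg_mul_sq hb).const_mul c).add
    (integrable_exp_neg_mul_sq hb)).congr (.of_forall fun x => ?_)
  simp only [Pi.add_apply]
  ring

lemma integral_mul_sq_add_one_mul_exp_neg_mul_sq (hb : 0 < b) (c : ℝ) :
    ∫ x : ℝ, (c * x ^ 2 + 1) * exp (-b * x ^ 2) = √(π / b) * (c / (2 * b) + 1) := by
  simp only [add_mul, mul_assoc, one_mul]
  rw [integral_add ((integrable_sq_mul_exp_neg_mul_sq hb).const_mul c)
    (integrable_exp_neg_mul_sq hb), integral_const_mul, integral_sq_mul_exp_neg_mul_sq hb,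
    integral_gaussian]
  ring

end GaussianSecondMoment

theorem stmt_15 (a : ℝ) (ha : 0 < a) (K : ℝ → ℝ → ℝ)
    (hK : ∀ s t : ℝ, K s t = (s * t + 1) * Real.exp (-(s - t) ^ 2 / 2)
      - (2 * s * t + 1) * Real.exp (-(s ^ 2 + t ^ 2) / 2)) :
    (∫ t : ℝ, K t t * Real.exp (-a * t ^ 2))
      = -(Real.sqrt Real.pi / 2)
        * (2 * a ^ ((5 : ℝ) / 2) - 2 * Real.sqrt (a + 1) * a ^ 2 + 4 * a ^ ((3 : ℝ) / 2)
          - 3 * Real.sqrt (a + 1) * a - Real.sqrt (a + 1))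
        / ((a + 1) ^ ((3 : ℝ) / 2) * a ^ ((3 : ℝ) / 2)) := by
  have ha1 : 0 < a + 1 := by linarith
  have hdiag : ∀ t : ℝ, K t t * exp (-a * t ^ 2) =
      (1 * t ^ 2 + 1) * exp (-a * t ^ 2) - (2 * t ^ 2 + 1) * exp (-(a + 1) * t ^ 2) := by
    intro t
    have hexp : exp (-(t ^ 2 + t ^ 2) / 2) * exp (-a * t ^ 2) = exp (-(a + 1) * t ^ 2) := by
      rw [← exp_add]; ring_nf
    rw [hK, sub_self, show (-(0 : ℝ) ^ 2 / 2) = 0 by norm_num, exp_zero, ← hexp]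
    ring
  rw [integral_congr_ae (.of_forall hdiag),
    integral_sub (integrable_mul_sq_add_one_mul_exp_neg_mul_sq ha 1)
      (integrable_mul_sq_add_one_mul_exp_neg_mul_sq ha1 2),
    integral_mul_sq_add_one_mul_exp_neg_mul_sq ha, integral_mul_sq_add_one_mul_exp_neg_mul_sq ha1,
    sqrt_div pi_pos.le, sqrt_div pi_pos.le]
  simp only [rpow_div_two_eq_sqrt _ ha.le, rpow_div_two_eq_sqrt _ ha1.le, rpow_ofNat]
  have hsa : √a ^ 2 = a := sq_sqrt ha.le
  have hsb : √(a + 1) ^ 2 = a + 1 := sq_sqrt ha1.le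
  have : √a ≠ 0 := (sqrt_pos.2 ha).ne'
  have : √(a + 1) ≠ 0 := (sqrt_pos.2 ha1).ne'
  field_simp
  -- The identity is now polynomial in `√a` and `√(a + 1)` modulo their squares.
  generalize √a = s at *
  generalize √(a + 1) = u at *
  subst hsa
  linear_combination s ^ 2 * ((1 + 2 * s ^ 2) * (s ^ 2 + 1) * u - 2 * s ^ 3 * (s ^ 2 + 2)) * hsb
end
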